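/- Let A = {0,1}, let k be a positive even integer, and let n ≥ k+1. Define, for i ∈ [0, 2^{n−1}−1], γ^{n,k}_{[i]} = θ^i(0)·γ^{n−1,k−1}_{[i]} and γ̄^{n,k}_{[i]} = θ^i(1)·γ^{n−1,k−1}_{[i]}, where γ^{n−1,k−1} is the σ_{k−1}-Gray cycle over {0,1}^{n−1} built for the odd integer k−1. Then γ^{n,k} is a σ_k-Gray cycle over Even_1^n and γ̄^{n,k} is a σ_k-Gray cycle over Odd_1^n; in particular each has length 2^{n−1}. -/

import Mathlib

/-- Hamming distance between two words (lists) of the same length: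
the number of positions in which they differ. -/
def hammingL {α : Type*} [DecidableEq α] (w w' : List α) : ℕ :=
  ((w.zip w').filter fun q => decide (q.1 ≠ q.2)).length

/-- `w` (restricted to indices `< N`) is a `σ_k`-Gray cycle over `X`:
its terms are pairwise distinct and enumerate `X` (a bijection from `[0, N-1]` onto `X`),
two consecutive terms have the same length and Hamming distance exactly `k`, and so do
the first and the last term. -/
def IsGrayCycleOn {α : Type*} [DecidableEq α] (k N : ℕ) (w : ℕ → List α)
    (X : Set (List α)) : Prop :=
  Set.BijOn w (Set.Iio N) X ∧
  (∀ i, 1 ≤ i → i < N →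
    (w (i - 1)).length = (w i).length ∧ hammingL (w (i - 1)) (w i) = k) ∧
  (0 < N → (w (N - 1)).length = (w 0).length ∧ hammingL (w (N - 1)) (w 0) = k)

/-- The bit complement `θ : 0 ↔ 1` on the binary alphabet `{0,1}`. -/
def cpl (x : Fin 2) : Fin 2 := x + 1

/-- The bit complement extended letterwise to binary words. -/
def cplW (w : List (Fin 2)) : List (Fin 2) := w.map cpl

/-- The reflected binary Gray code `g^{m,1}` over words of length `m`:
`g^{0,1} = (ε)` and `g^{m+1,1} = (0·g^{m,1}, 1·(g^{m,1})^R)`. -/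
def binGray : ℕ → List (List (Fin 2))
  | 0 => [[]]
  | m + 1 =>
      (binGray m).map (fun w => 0 :: w) ++ (binGray m).reverse.map (fun w => 1 :: w)

/-- The sequence `γ^{n0,1}`: `γ^{n0,1}_{[0]} = g^{n0,1}_{[0]}` and
`γ^{n0,1}_{[i]} = g^{n0,1}_{[2^{n0} - i]}` for `1 ≤ i ≤ 2^{n0} - 1`. -/
def gamma1 (n0 i : ℕ) : List (Fin 2) :=
  if i = 0 then (binGray n0).getD 0 [] else (binGray n0).getD (2 ^ n0 - i) []

/-- The sequence `ρ^{n0,1}`: `ρ^{n0,1}_{[0]} = g^{n0,1}_{[2^{n0}-1]}` and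
`ρ^{n0,1}_{[i]} = g^{n0,1}_{[i-1]}` for `1 ≤ i ≤ 2^{n0} - 1`. -/
def rho1 (n0 i : ℕ) : List (Fin 2) :=
  if i = 0 then (binGray n0).getD (2 ^ n0 - 1) [] else (binGray n0).getD (i - 1) []

/-- `grSeq n0 true t i` (resp. `grSeq n0 false t i`) is the term of index `i` of the
sequence `γ^{n0+2t, 2t+1}` (resp. `ρ^{n0+2t, 2t+1}`), built inductively: the base cases
are `γ^{n0,1}` and `ρ^{n0,1}`, and, writing `i = q·2^m + r` with `m = n0 + 2t` and
`r < 2^m`, `γ^{m+2, (2t+1)+2}_{[i]}` is `θ^r(00)·γ^{m,2t+1}_{[r]}`, `θ^r(01)·ρ^{m,2t+1}_{[r]}`,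
`θ^r(11)·γ^{m,2t+1}_{[r]}`, `θ^r(10)·ρ^{m,2t+1}_{[r]}` according to `q = 0, 1, 2, 3`, and
`ρ^{m+2, (2t+1)+2}_{[i]}` is `θ^r(10)·γ^{m,2t+1}_{[r]}`, `θ^r(11)·ρ^{m,2t+1}_{[r]}`,
`θ^r(01)·γ^{m,2t+1}_{[r]}`, `θ^r(00)·ρ^{m,2t+1}_{[r]}` according to `q = 0, 1, 2, 3`. -/
def grSeq (n0 : ℕ) : Bool → ℕ → ℕ → List (Fin 2)
  | b, 0, i => if b then gamma1 n0 i else rho1 n0 i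
  | b, t + 1, i =>
      cplW^[i % 2 ^ (n0 + 2 * t)]
        (if b then
          (if i / 2 ^ (n0 + 2 * t) = 0 then [0, 0]
           else if i / 2 ^ (n0 + 2 * t) = 1 then [0, 1]
           else if i / 2 ^ (n0 + 2 * t) = 2 then [1, 1] else [1, 0])
         else
          (if i / 2 ^ (n0 + 2 * t) = 0 then [1, 0]
           else if i / 2 ^ (n0 + 2 * t) = 1 then [1, 1]
           else if i / 2 ^ (n0 + 2 * t) = 2 then [0, 1] else [0, 0])) ++
        grSeq n0 (i / 2 ^ (n0 + 2 * t) % 2 == 0) t (i % 2 ^ (n0 + 2 * t))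

/-- For odd `k` and `n ≥ k + 1`, `gammaNK n k i` is the term `γ^{n,k}_{[i]}`
(here `n0 = n - k + 1` and `k = 2·(k/2) + 1`). -/
def gammaNK (n k i : ℕ) : List (Fin 2) := grSeq (n + 1 - k) true (k / 2) i

/-- For odd `k` and `n ≥ k + 1`, `rhoNK n k i` is the term `ρ^{n,k}_{[i]}`. -/
def rhoNK (n k i : ℕ) : List (Fin 2) := grSeq (n + 1 - k) false (k / 2) i

/-!
For odd `k = 2t + 1`, `γ^{n,k}` and `ρ^{n,k}` are `σ_k`-Gray cycles over `{0,1}^n`. This is proved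
by induction on `t` together with two companion facts: the parity of `|γ_[i]|_1` is that of `i`
(that of `i + 1` for `ρ`), and the last term of `γ` (resp. `ρ`) is at distance `k + 1` from the
first term of `ρ` (resp. `γ`). Inside a block `θ^r(xy)·γ_[r]` (or `θ^r(xy)·ρ_[r]`) consecutive
terms differ in the `k` tail positions and in both complemented head letters; at a block boundary
the head changes in one letter while the tail jumps between `γ` and `ρ`, at distance `k + 1`.
The base case comes from the reflected Gray code `g`, of which `γ^{n0,1}` is a reversal and
`ρ^{n0,1}` a rotation; the seams are `g_[1]`, `g_[2^m-1]` and `g_[2^m-2]`, `g_[0]`, both pairs at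
distance `2`. Injectivity and the count `2^n` of binary words give bijectivity.

For even `k`, prefixing `θ^i(a)` adds one to every distance (the number of terms is even, so also
across the wrap-around), and by the parity fact the number of `1`s in `θ^i(a)·γ_[i]` has the parity
of `a`, so the terms fill exactly `Even_1^n` or `Odd_1^n`.
-/

section Hamming

variable {α : Type*} [DecidableEq α]

@[simp]
lemma hammingL_cons (a b : α) (w w' : List α) :
    hammingL (a :: w) (b :: w') = (if a = b then 0 else 1) + hammingL w w' := by
  by_cases h : a = b <;> simp [hammingL, h]
  omega

@[simp]
lemma hammingL_self (w : List α) : hammingL w w = 0 := by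
  induction w with
  | nil => rfl
  | cons a w ih => simp [ih]

lemma hammingL_comm (w w' : List α) : hammingL w w' = hammingL w' w := by
  induction w generalizing w' with
  | nil => cases w' <;> rfl
  | cons a w ih =>
    cases w' with
    | nil => rfl
    | cons b w' => simp only [hammingL_cons, ih, eq_comm]

lemma hammingL_append {x y : List α} (h : x.length = y.length) (w w' : List α) :
    hammingL (x ++ w) (y ++ w') = hammingL x y + hammingL w w' := by
  induction x generalizing y with
  | nil => cases y <;> simp_all
  | cons a x ih =>
    cases y with
    | nil => simp at h
    | cons b y => simp only [List.cons_append, hammingL_cons, ih (Nat.succ.inj h), add_assoc]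

end Hamming

lemma Function.Involutive.iterate_eq_ite {α : Type*} {f : α → α} (hf : Function.Involutive f)
    (i : ℕ) (x : α) : f^[i] x = if i % 2 = 0 then x else f x := by
  induction i with
  | zero => simp
  | succ i ih =>
    rw [Function.iterate_succ_apply', ih]
    rcases Nat.mod_two_eq_zero_or_one i with h | h
    · simp [h, Nat.succ_mod_two_eq_zero_iff]
    · simp [h, Nat.succ_mod_two_eq_zero_iff, hf x]

lemma cpl_iterate_val (a : Fin 2) (i : ℕ) : (cpl^[i] a).val = (a.val + i) % 2 := by
  induction i with
  | zero => simp [Nat.mod_eq_of_lt a.isLt]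
  | succ i ih =>
    rw [Function.iterate_succ_apply']
    have hcpl : ∀ x : Fin 2, (cpl x).val = (x.val + 1) % 2 := by decide
    rw [hcpl, ih]
    omega

lemma cpl_iterate_eq_cpl_iterate_iff (a : Fin 2) (i j : ℕ) :
    cpl^[i] a = cpl^[j] a ↔ i % 2 = j % 2 := by
  rw [Fin.ext_iff, cpl_iterate_val, cpl_iterate_val]
  omega

lemma count_one_cons (x : Fin 2) (w : List (Fin 2)) : (x :: w).count 1 = w.count 1 + x.val := by
  fin_cases x <;> simp

lemma cplW_involutive : Function.Involutive cplW := by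
  have hcpl : Function.Involutive cpl := by unfold Function.Involutive; decide
  intro w
  simp [cplW, hcpl.comp_self]

@[simp]
lemma length_cplW (w : List (Fin 2)) : (cplW w).length = w.length := List.length_map _

@[simp]
lemma length_iterate_cplW (r : ℕ) (w : List (Fin 2)) : (cplW^[r] w).length = w.length := by
  rw [cplW_involutive.iterate_eq_ite]
  split_ifs <;> simp

lemma hammingL_cplW (w : List (Fin 2)) : hammingL w (cplW w) = w.length := by
  induction w with
  | nil => rfl
  | cons a w ih =>
    have hne : ∀ x : Fin 2, x ≠ cpl x := by decide
    simp only [cplW, List.map_cons, hammingL_cons, if_neg (hne a)] at ih ⊢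
    rw [ih, List.length_cons, add_comm]

lemma count_one_add_hammingL_mod_two {w w' : List (Fin 2)} (h : w.length = w'.length) :
    (w.count 1 + hammingL w w') % 2 = w'.count 1 % 2 := by
  induction w generalizing w' with
  | nil => cases w' <;> simp_all
  | cons a w ih =>
    cases w' with
    | nil => simp at h
    | cons b w' =>
      have H := ih (Nat.succ.inj h)
      rw [hammingL_cons, count_one_cons, count_one_cons]
      fin_cases a <;> fin_cases b <;> simp <;> omega

lemma mem_binGray_iff {m : ℕ} {w : List (Fin 2)} : w ∈ binGray m ↔ w.length = m := by
  induction m generalizing w with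
  | zero => simp [binGray, List.length_eq_zero_iff]
  | succ m ih =>
    cases w with
    | nil => simp [binGray]
    | cons a w => fin_cases a <;> simp [binGray, ih]

lemma length_binGray (m : ℕ) : (binGray m).length = 2 ^ m := by
  induction m with
  | zero => rfl
  | succ m ih => simp [binGray, ih, pow_succ, mul_two]

lemma nodup_binGray (m : ℕ) : (binGray m).Nodup := by
  induction m with
  | zero => simp [binGray]
  | succ m ih =>
    refine List.Nodup.append (ih.map List.cons_injective)
      ((List.nodup_reverse.2 ih).map List.cons_injective) ?_
    simp [List.disjoint_left]

/-- The term `g^{m,1}_{[i]}`. -/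
def binGrayAt (m i : ℕ) : List (Fin 2) := (binGray m).getD i []

section BinGrayAt

variable {m i : ℕ}

lemma binGrayAt_eq_getElem (h : i < 2 ^ m) :
    binGrayAt m i = (binGray m)[i]'(by rwa [length_binGray]) :=
  List.getD_eq_getElem _ _ _

lemma length_binGrayAt (h : i < 2 ^ m) : (binGrayAt m i).length = m := by
  rw [binGrayAt_eq_getElem h, ← mem_binGray_iff]
  exact List.getElem_mem _

lemma binGrayAt_injOn (m : ℕ) : Set.InjOn (binGrayAt m) (Set.Iio (2 ^ m)) := by
  intro i hi j hj h
  rw [binGrayAt_eq_getElem hi, binGrayAt_eq_getElem hj] at h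
  exact (nodup_binGray m).getElem_inj_iff.1 h

lemma binGrayAt_succ_of_lt (h : i < 2 ^ m) : binGrayAt (m + 1) i = 0 :: binGrayAt m i := by
  have hlt : i < (binGray m).length := by rwa [length_binGray]
  simp [binGrayAt, binGray, List.getD_eq_getElem?_getD, List.getElem?_append_left, hlt]

lemma binGrayAt_succ_two_pow_add (h : i < 2 ^ m) :
    binGrayAt (m + 1) (2 ^ m + i) = 1 :: binGrayAt m (2 ^ m - 1 - i) := by
  have hlt : 2 ^ m - 1 - i < (binGray m).length := by rw [length_binGray]; omega
  simp [binGrayAt, binGray, List.getD_eq_getElem?_getD, length_binGray, h,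
    List.getElem?_eq_getElem hlt]

lemma count_one_binGrayAt_zero (m : ℕ) : (binGrayAt m 0).count 1 = 0 := by
  induction m with
  | zero => rfl
  | succ m ih => rw [binGrayAt_succ_of_lt (Nat.two_pow_pos m), count_one_cons, ih]; rfl

lemma hammingL_binGrayAt_succ (hi : i + 1 < 2 ^ m) :
    hammingL (binGrayAt m i) (binGrayAt m (i + 1)) = 1 := by
  induction m generalizing i with
  | zero => simp at hi
  | succ m ih =>
    rcases lt_trichotomy (i + 1) (2 ^ m) with h | h | h
    · rw [binGrayAt_succ_of_lt (by omega), binGrayAt_succ_of_lt h, hammingL_cons, if_pos rfl, ih h]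
    · rw [binGrayAt_succ_of_lt (by omega), h, ← add_zero (2 ^ m),
        binGrayAt_succ_two_pow_add (Nat.two_pow_pos m), hammingL_cons, if_neg (by decide),
        show 2 ^ m - 1 - 0 = i by omega, hammingL_self]
    · obtain ⟨j, rfl⟩ : ∃ j, i = 2 ^ m + j := ⟨i - 2 ^ m, by omega⟩
      rw [pow_succ] at hi
      rw [add_assoc, binGrayAt_succ_two_pow_add (by omega), binGrayAt_succ_two_pow_add (by omega),
        hammingL_cons, if_pos rfl, zero_add, hammingL_comm,
        show 2 ^ m - 1 - j = 2 ^ m - 1 - (j + 1) + 1 by omega, ih (by omega)]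

lemma hammingL_binGrayAt_last_zero (hm : 1 ≤ m) :
    hammingL (binGrayAt m (2 ^ m - 1)) (binGrayAt m 0) = 1 := by
  obtain ⟨m, rfl⟩ := Nat.exists_eq_add_of_le' hm
  have hpos := Nat.two_pow_pos m
  rw [show 2 ^ (m + 1) - 1 = 2 ^ m + (2 ^ m - 1) by rw [pow_succ]; omega,
    binGrayAt_succ_two_pow_add (by omega), binGrayAt_succ_of_lt hpos,
    show 2 ^ m - 1 - (2 ^ m - 1) = 0 by omega]
  simp

lemma hammingL_binGrayAt_one_last (hm : 2 ≤ m) :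
    hammingL (binGrayAt m 1) (binGrayAt m (2 ^ m - 1)) = 2 := by
  obtain ⟨m, rfl⟩ : ∃ m', m = m' + 1 := ⟨m - 1, by omega⟩
  have h2 : 2 ≤ 2 ^ m := Nat.le_self_pow (by omega) 2
  rw [binGrayAt_succ_of_lt (by omega),
    show 2 ^ (m + 1) - 1 = 2 ^ m + (2 ^ m - 1) by rw [pow_succ]; omega,
    binGrayAt_succ_two_pow_add (by omega), show 2 ^ m - 1 - (2 ^ m - 1) = 0 by omega,
    hammingL_cons, if_neg (by decide), hammingL_comm, hammingL_binGrayAt_succ (by omega)]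

lemma hammingL_binGrayAt_sub_two_zero (hm : 2 ≤ m) :
    hammingL (binGrayAt m (2 ^ m - 2)) (binGrayAt m 0) = 2 := by
  obtain ⟨m, rfl⟩ : ∃ m', m = m' + 1 := ⟨m - 1, by omega⟩
  have h2 : 2 ≤ 2 ^ m := Nat.le_self_pow (by omega) 2
  rw [show 2 ^ (m + 1) - 2 = 2 ^ m + (2 ^ m - 2) by rw [pow_succ]; omega,
    binGrayAt_succ_two_pow_add (by omega), binGrayAt_succ_of_lt (by omega),
    show 2 ^ m - 1 - (2 ^ m - 2) = 0 + 1 by omega,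
    hammingL_cons, if_neg (by decide), hammingL_comm, hammingL_binGrayAt_succ (by omega)]

lemma count_one_binGrayAt_mod_two (hi : i < 2 ^ m) : (binGrayAt m i).count 1 % 2 = i % 2 := by
  induction i with
  | zero => rw [count_one_binGrayAt_zero]
  | succ i ih =>
    have H := count_one_add_hammingL_mod_two
      ((length_binGrayAt (m := m) (i := i) (by omega)).trans (length_binGrayAt hi).symm)
    rw [hammingL_binGrayAt_succ hi] at H
    have := ih (by omega)
    omega

end BinGrayAt

lemma surjOn_setOf_length_eq {f : ℕ → List (Fin 2)} {m : ℕ}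
    (hmaps : Set.MapsTo f (Set.Iio (2 ^ m)) {w | w.length = m})
    (hinj : Set.InjOn f (Set.Iio (2 ^ m))) :
    Set.SurjOn f (Set.Iio (2 ^ m)) {w | w.length = m} := by
  have hwords : {w : List (Fin 2) | w.length = m} = ((binGray m).toFinset : Set _) := by
    ext w
    simp [mem_binGray_iff]
  have hindices : Set.Iio (2 ^ m) = (Finset.range (2 ^ m) : Set ℕ) := by
    ext i
    simp
  rw [hwords, hindices] at hmaps ⊢
  rw [hindices] at hinj
  refine Finset.surjOn_of_injOn_of_card_le f hmaps hinj ?_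
  rw [List.toFinset_card_of_nodup (nodup_binGray m), length_binGray, Finset.card_range]

/-- The heads `θ^0(xy)` of the four blocks of `γ` (`true`) and `ρ` (`false`) in `grSeq`. -/
def grHead : Bool → ℕ → List (Fin 2)
  | true, q => if q = 0 then [0, 0] else if q = 1 then [0, 1] else if q = 2 then [1, 1] else [1, 0]
  | false, q => if q = 0 then [1, 0] else if q = 1 then [1, 1] else if q = 2 then [0, 1] else [0, 0]

@[simp]
lemma length_grHead (b : Bool) (q : ℕ) : (grHead b q).length = 2 := by
  cases b <;> simp only [grHead] <;> split_ifs <;> rfl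

lemma grHead_injOn (b : Bool) {q q' : ℕ} (hq : q < 4) (hq' : q' < 4)
    (h : grHead b q = grHead b q') : q = q' := by
  cases b <;> interval_cases q <;> interval_cases q' <;> first | rfl | exact absurd h (by decide)

-- Complementing preserves whether the two letters of a head agree, which happens exactly for
-- even `q` in `γ` and for odd `q` in `ρ`.
lemma mod_two_eq_of_iterate_cplW_grHead_eq (b : Bool) {q q' r r' : ℕ} (hq : q < 4) (hq' : q' < 4)
    (h : cplW^[r] (grHead b q) = cplW^[r'] (grHead b q')) : q % 2 = q' % 2 := by
  rw [cplW_involutive.iterate_eq_ite, cplW_involutive.iterate_eq_ite] at h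
  split_ifs at h <;> cases b <;> interval_cases q <;> interval_cases q' <;>
    first | rfl | exact absurd h (by decide)

lemma count_one_iterate_cplW_grHead_mod_two (b : Bool) (r : ℕ) {q : ℕ} (hq : q < 4) :
    (cplW^[r] (grHead b q)).count 1 % 2 = (if b then q else q + 1) % 2 := by
  rw [cplW_involutive.iterate_eq_ite]
  cases b <;> simp only [Bool.false_eq_true, ↓reduceIte] <;> split_ifs <;> interval_cases q <;>
    decide

lemma hammingL_cplW_grHead_succ (b : Bool) {q : ℕ} (hq : q < 3) :
    hammingL (cplW (grHead b q)) (grHead b (q + 1)) = 1 := by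
  cases b <;> interval_cases q <;> decide

lemma hammingL_cplW_grHead_three_zero (b c : Bool) :
    hammingL (cplW (grHead b 3)) (grHead c 0) = if b = c then 1 else 2 := by
  cases b <;> cases c <;> decide

lemma grSeq_succ_two_pow_mul_add {n0 t r : ℕ} (b : Bool) (q : ℕ) (hr : r < 2 ^ (n0 + 2 * t)) :
    grSeq n0 b (t + 1) (2 ^ (n0 + 2 * t) * q + r) =
      cplW^[r] (grHead b q) ++ grSeq n0 (q % 2 == 0) t r := by
  have hdiv : (2 ^ (n0 + 2 * t) * q + r) / 2 ^ (n0 + 2 * t) = q := by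
    rw [Nat.mul_add_div (Nat.two_pow_pos _), Nat.div_eq_of_lt hr, add_zero]
  have hmod : (2 ^ (n0 + 2 * t) * q + r) % 2 ^ (n0 + 2 * t) = r := by
    rw [Nat.mul_add_mod, Nat.mod_eq_of_lt hr]
  cases b <;> simp only [grSeq, grHead, hdiv, hmod] <;> rfl

lemma exists_eq_two_pow_mul_add {M i : ℕ} (hi : i < 2 ^ (M + 2)) :
    ∃ q < 4, ∃ r < 2 ^ M, i = 2 ^ M * q + r :=
  ⟨i / 2 ^ M, Nat.div_lt_of_lt_mul (by rwa [pow_add] at hi), i % 2 ^ M,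
    Nat.mod_lt _ (Nat.two_pow_pos M), (Nat.div_add_mod i _).symm⟩

-- For `b ≠ c`, `hammingL_last_zero` is the seam used at the block boundaries of the next level,
-- where the tail switches between `γ` and `ρ`.
structure GrSeqInvariant (n0 t : ℕ) : Prop where
  length_eq : ∀ b, ∀ i < 2 ^ (n0 + 2 * t), (grSeq n0 b t i).length = n0 + 2 * t
  injOn : ∀ b, Set.InjOn (grSeq n0 b t) (Set.Iio (2 ^ (n0 + 2 * t)))
  count_one_mod_two : ∀ b, ∀ i < 2 ^ (n0 + 2 * t),
    (grSeq n0 b t i).count 1 % 2 = (if b then i else i + 1) % 2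
  hammingL_succ : ∀ b, ∀ i, i + 1 < 2 ^ (n0 + 2 * t) →
    hammingL (grSeq n0 b t i) (grSeq n0 b t (i + 1)) = 2 * t + 1
  hammingL_last_zero : ∀ b c, hammingL (grSeq n0 b t (2 ^ (n0 + 2 * t) - 1)) (grSeq n0 c t 0) =
    if b = c then 2 * t + 1 else 2 * t + 2

lemma grSeq_zero_true (n0 i : ℕ) :
    grSeq n0 true 0 i = binGrayAt n0 (if i = 0 then 0 else 2 ^ n0 - i) := by
  change gamma1 n0 i = _
  unfold gamma1; split_ifs <;> rfl

lemma grSeq_zero_false (n0 i : ℕ) :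
    grSeq n0 false 0 i = binGrayAt n0 (if i = 0 then 2 ^ n0 - 1 else i - 1) := by
  change rho1 n0 i = _
  unfold rho1; split_ifs <;> rfl

lemma hammingL_grSeq_zero_succ {n0 i : ℕ} (hn0 : 1 ≤ n0) (b : Bool) (hi : i + 1 < 2 ^ n0) :
    hammingL (grSeq n0 b 0 i) (grSeq n0 b 0 (i + 1)) = 1 := by
  cases b
  · rw [grSeq_zero_false, grSeq_zero_false, if_neg (Nat.succ_ne_zero i), Nat.add_sub_cancel]
    split_ifs with hi0
    · subst hi0
      exact hammingL_binGrayAt_last_zero hn0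
    · obtain ⟨j, rfl⟩ : ∃ j, i = j + 1 := ⟨i - 1, by omega⟩
      exact hammingL_binGrayAt_succ (by omega)
  · rw [grSeq_zero_true, grSeq_zero_true, if_neg (Nat.succ_ne_zero i), hammingL_comm]
    split_ifs with hi0
    · subst hi0
      exact hammingL_binGrayAt_last_zero hn0
    · rw [show 2 ^ n0 - i = 2 ^ n0 - (i + 1) + 1 by omega]
      exact hammingL_binGrayAt_succ (by omega)

lemma hammingL_grSeq_zero_last_zero {n0 : ℕ} (hn0 : 2 ≤ n0) (b c : Bool) :
    hammingL (grSeq n0 b 0 (2 ^ n0 - 1)) (grSeq n0 c 0 0) = if b = c then 1 else 2 := by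
  have h4 : 4 ≤ 2 ^ n0 := by simpa using Nat.pow_le_pow_right two_pos hn0
  have hlast : 2 ^ n0 - 1 ≠ 0 := by omega
  cases b <;> cases c <;> simp only [grSeq_zero_true, grSeq_zero_false, if_pos, if_neg hlast,
    reduceCtorEq, if_false, show 2 ^ n0 - (2 ^ n0 - 1) = 1 by omega]
  · rw [show 2 ^ n0 - 1 = 2 ^ n0 - 1 - 1 + 1 by omega]
    exact hammingL_binGrayAt_succ (by omega)
  · exact hammingL_binGrayAt_sub_two_zero hn0
  · exact hammingL_binGrayAt_one_last hn0
  · rw [hammingL_comm]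
    exact hammingL_binGrayAt_succ (i := 0) (by omega)

lemma grSeqInvariant_zero {n0 : ℕ} (hn0 : 2 ≤ n0) : GrSeqInvariant n0 0 := by
  have h4 : 4 ≤ 2 ^ n0 := by simpa using Nat.pow_le_pow_right two_pos hn0
  have heven : 2 ^ n0 % 2 = 0 := Nat.two_pow_mod_two_eq_zero.2 (by omega)
  refine ⟨fun b i hi => ?_, fun b i hi j hj h => ?_, fun b i hi => ?_,
    fun b i => hammingL_grSeq_zero_succ (by omega) b, hammingL_grSeq_zero_last_zero hn0⟩
    <;> simp only [mul_zero, add_zero, Set.mem_Iio] at *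
  · cases b
    · rw [grSeq_zero_false]; exact length_binGrayAt (by split_ifs <;> omega)
    · rw [grSeq_zero_true]; exact length_binGrayAt (by split_ifs <;> omega)
  · cases b
    · rw [grSeq_zero_false, grSeq_zero_false] at h
      have := binGrayAt_injOn n0 (Set.mem_Iio.2 (by split_ifs <;> omega))
        (Set.mem_Iio.2 (by split_ifs <;> omega)) h
      split_ifs at this <;> omega
    · rw [grSeq_zero_true, grSeq_zero_true] at h
      have := binGrayAt_injOn n0 (Set.mem_Iio.2 (by split_ifs <;> omega))
        (Set.mem_Iio.2 (by split_ifs <;> omega)) h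
      split_ifs at this <;> omega
  · cases b
    · have := count_one_binGrayAt_mod_two (m := n0) (i := if i = 0 then 2 ^ n0 - 1 else i - 1)
        (by split_ifs <;> omega)
      rw [grSeq_zero_false, if_neg Bool.false_ne_true]
      split_ifs at this ⊢ <;> omega
    · have := count_one_binGrayAt_mod_two (m := n0) (i := if i = 0 then 0 else 2 ^ n0 - i)
        (by split_ifs <;> omega)
      rw [grSeq_zero_true, if_pos rfl]
      split_ifs at this ⊢ <;> omega

namespace GrSeqInvariant

variable {n0 t : ℕ}

lemma length_eq_succ (I : GrSeqInvariant n0 t) (b : Bool) {i : ℕ}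
    (hi : i < 2 ^ (n0 + 2 * (t + 1))) : (grSeq n0 b (t + 1) i).length = n0 + 2 * (t + 1) := by
  obtain ⟨q, -, r, hr, rfl⟩ := exists_eq_two_pow_mul_add (M := n0 + 2 * t) hi
  rw [grSeq_succ_two_pow_mul_add b q hr, List.length_append, length_iterate_cplW, length_grHead,
    I.length_eq _ r hr]
  ring

lemma injOn_succ (I : GrSeqInvariant n0 t) (b : Bool) :
    Set.InjOn (grSeq n0 b (t + 1)) (Set.Iio (2 ^ (n0 + 2 * (t + 1)))) := by
  intro i hi j hj h
  obtain ⟨q, hq, r, hr, rfl⟩ := exists_eq_two_pow_mul_add (M := n0 + 2 * t) hi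
  obtain ⟨q', hq', r', hr', rfl⟩ := exists_eq_two_pow_mul_add (M := n0 + 2 * t) hj
  rw [grSeq_succ_two_pow_mul_add b q hr, grSeq_succ_two_pow_mul_add b q' hr'] at h
  obtain ⟨hhead, htail⟩ := List.append_inj h (by simp)
  rw [mod_two_eq_of_iterate_cplW_grHead_eq b hq hq' hhead] at htail
  obtain rfl : r = r' := I.injOn _ hr hr' htail
  obtain rfl : q = q' := grHead_injOn b hq hq' (cplW_involutive.injective.iterate r hhead)
  rfl

lemma count_one_mod_two_succ (I : GrSeqInvariant n0 t) (hM : 0 < n0 + 2 * t) (b : Bool) {i : ℕ}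
    (hi : i < 2 ^ (n0 + 2 * (t + 1))) :
    (grSeq n0 b (t + 1) i).count 1 % 2 = (if b then i else i + 1) % 2 := by
  obtain ⟨q, hq, r, hr, rfl⟩ := exists_eq_two_pow_mul_add (M := n0 + 2 * t) hi
  have hblock : 2 ^ (n0 + 2 * t) * q % 2 = 0 := by
    rw [Nat.mul_mod, Nat.two_pow_mod_two_eq_zero.2 hM, zero_mul, Nat.zero_mod]
  have hhead := count_one_iterate_cplW_grHead_mod_two b r hq
  have htail : (grSeq n0 (q % 2 == 0) t r).count 1 % 2 = (r + q) % 2 := by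
    have := I.count_one_mod_two (q % 2 == 0) r hr
    rcases Nat.mod_two_eq_zero_or_one q with hq2 | hq2 <;> simp [hq2] at this ⊢ <;> omega
  rw [grSeq_succ_two_pow_mul_add b q hr, List.count_append]
  cases b <;> simp only [Bool.false_eq_true, ↓reduceIte] at hhead ⊢ <;> omega

lemma hammingL_block_boundary (I : GrSeqInvariant n0 t) (hM : 0 < n0 + 2 * t) (b c : Bool)
    (q q' : ℕ) :
    hammingL (grSeq n0 b (t + 1) (2 ^ (n0 + 2 * t) * q + (2 ^ (n0 + 2 * t) - 1)))
      (grSeq n0 c (t + 1) (2 ^ (n0 + 2 * t) * q' + 0)) =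
      hammingL (cplW (grHead b q)) (grHead c q') +
        if q % 2 = q' % 2 then 2 * t + 1 else 2 * t + 2 := by
  have hpos := Nat.two_pow_pos (n0 + 2 * t)
  have hodd : (2 ^ (n0 + 2 * t) - 1) % 2 ≠ 0 := by
    have := Nat.two_pow_mod_two_eq_zero.2 hM
    omega
  rw [grSeq_succ_two_pow_mul_add b q (by omega), grSeq_succ_two_pow_mul_add c q' hpos,
    cplW_involutive.iterate_eq_ite, if_neg hodd, Function.iterate_zero_apply,
    hammingL_append (by simp), I.hammingL_last_zero]
  rcases Nat.mod_two_eq_zero_or_one q with hq | hq <;>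
    rcases Nat.mod_two_eq_zero_or_one q' with hq' | hq' <;> simp [hq, hq']

lemma hammingL_succ_succ (I : GrSeqInvariant n0 t) (hM : 0 < n0 + 2 * t) (b : Bool) {i : ℕ}
    (hi : i + 1 < 2 ^ (n0 + 2 * (t + 1))) :
    hammingL (grSeq n0 b (t + 1) i) (grSeq n0 b (t + 1) (i + 1)) = 2 * (t + 1) + 1 := by
  obtain ⟨q, hq, r, hr, rfl⟩ := exists_eq_two_pow_mul_add (M := n0 + 2 * t) (Nat.lt_of_succ_lt hi)
  rcases (Nat.succ_le_of_lt hr).lt_or_eq with hr1 | hr1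
  · rw [add_assoc, grSeq_succ_two_pow_mul_add b q hr, grSeq_succ_two_pow_mul_add b q hr1,
      hammingL_append (by simp), Function.iterate_succ_apply', hammingL_cplW,
      I.hammingL_succ _ _ hr1, length_iterate_cplW, length_grHead]
    ring
  · have hq3 : q < 3 := by
      rw [show 2 ^ (n0 + 2 * (t + 1)) = 2 ^ (n0 + 2 * t) * 4 by ring] at hi
      have : 2 ^ (n0 + 2 * t) * (q + 1) < 2 ^ (n0 + 2 * t) * 4 := by rw [mul_add]; omega
      have := Nat.lt_of_mul_lt_mul_left this
      omega
    obtain rfl : r = 2 ^ (n0 + 2 * t) - 1 := by omega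
    rw [show 2 ^ (n0 + 2 * t) * q + (2 ^ (n0 + 2 * t) - 1) + 1 = 2 ^ (n0 + 2 * t) * (q + 1) + 0 by
      rw [mul_add]; omega, I.hammingL_block_boundary hM, hammingL_cplW_grHead_succ b hq3,
      if_neg (by omega)]
    ring

lemma hammingL_last_zero_succ (I : GrSeqInvariant n0 t) (hM : 0 < n0 + 2 * t) (b c : Bool) :
    hammingL (grSeq n0 b (t + 1) (2 ^ (n0 + 2 * (t + 1)) - 1)) (grSeq n0 c (t + 1) 0) =
      if b = c then 2 * (t + 1) + 1 else 2 * (t + 1) + 2 := by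
  have hpos := Nat.two_pow_pos (n0 + 2 * t)
  have hboundary := I.hammingL_block_boundary hM b c 3 0
  rw [mul_zero, add_zero, hammingL_cplW_grHead_three_zero,
    if_neg (show 3 % 2 ≠ 0 % 2 by decide)] at hboundary
  rw [show 2 ^ (n0 + 2 * (t + 1)) - 1 = 2 ^ (n0 + 2 * t) * 3 + (2 ^ (n0 + 2 * t) - 1) by
      rw [show 2 ^ (n0 + 2 * (t + 1)) = 2 ^ (n0 + 2 * t) * 4 by ring]; omega, hboundary]
  split_ifs <;> ring

lemma succ (I : GrSeqInvariant n0 t) (hM : 0 < n0 + 2 * t) : GrSeqInvariant n0 (t + 1) :=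
  ⟨fun b _ => I.length_eq_succ b, I.injOn_succ, fun b _ => I.count_one_mod_two_succ hM b,
    fun b _ => I.hammingL_succ_succ hM b, I.hammingL_last_zero_succ hM⟩

end GrSeqInvariant

lemma grSeqInvariant {n0 : ℕ} (hn0 : 2 ≤ n0) (t : ℕ) : GrSeqInvariant n0 t := by
  induction t with
  | zero => exact grSeqInvariant_zero hn0
  | succ t ih => exact ih.succ (by omega)

theorem isGrayCycleOn_grSeq {n0 : ℕ} (hn0 : 2 ≤ n0) (b : Bool) (t : ℕ) :
    IsGrayCycleOn (2 * t + 1) (2 ^ (n0 + 2 * t)) (grSeq n0 b t) {w | w.length = n0 + 2 * t} := by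
  have I := grSeqInvariant hn0 t
  have hmaps : Set.MapsTo (grSeq n0 b t) (Set.Iio (2 ^ (n0 + 2 * t))) {w | w.length = n0 + 2 * t} :=
    fun i hi => I.length_eq b i hi
  refine ⟨⟨hmaps, I.injOn b, surjOn_setOf_length_eq hmaps (I.injOn b)⟩, fun i hi1 hi => ?_,
    fun hpos => ?_⟩
  · obtain ⟨j, rfl⟩ : ∃ j, i = j + 1 := ⟨i - 1, by omega⟩
    exact ⟨(I.length_eq b j (by omega)).trans (I.length_eq b (j + 1) hi).symm,
      I.hammingL_succ b j hi⟩
  · refine ⟨(I.length_eq b _ (by omega)).trans (I.length_eq b 0 hpos).symm, ?_⟩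
    rw [I.hammingL_last_zero, if_pos rfl]

theorem IsGrayCycleOn.cons_iterate_cpl {k N m : ℕ} {g : ℕ → List (Fin 2)}
    (hg : IsGrayCycleOn k N g {w | w.length = m}) (hN : Even N)
    (hcount : ∀ i < N, (g i).count 1 % 2 = i % 2) (a : Fin 2) :
    IsGrayCycleOn (k + 1) N (fun i => cpl^[i] a :: g i)
      {w | w.length = m + 1 ∧ w.count 1 % 2 = a.val} := by
  obtain ⟨⟨hmaps, hinj, hsurj⟩, hadj, hwrap⟩ := hg
  have ha := a.isLt
  refine ⟨⟨fun i hi => ?_, fun i hi j hj h => hinj hi hj (List.cons.inj h).2, fun w hw => ?_⟩,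
    fun i hi1 hi => ?_, fun hpos => ?_⟩
  · refine ⟨congrArg (· + 1) (hmaps hi), ?_⟩
    have := hcount i hi
    rw [count_one_cons, cpl_iterate_val]
    omega
  · obtain ⟨hlen, hpar⟩ := hw
    obtain ⟨x, v, rfl⟩ := List.exists_cons_of_length_eq_add_one hlen
    obtain ⟨i, hi, rfl⟩ := hsurj (Nat.succ.inj hlen)
    refine ⟨i, hi, ?_⟩
    have := hcount i hi
    have hx := x.isLt
    rw [count_one_cons] at hpar
    simp only [List.cons.injEq, and_true]
    rw [Fin.ext_iff, cpl_iterate_val]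
    omega
  · obtain ⟨hlen, hdist⟩ := hadj i hi1 hi
    refine ⟨congrArg (· + 1) hlen, ?_⟩
    rw [hammingL_cons, hdist, if_neg (by rw [cpl_iterate_eq_cpl_iterate_iff]; omega), add_comm]
  · obtain ⟨hlen, hdist⟩ := hwrap hpos
    obtain ⟨j, hj⟩ := hN
    refine ⟨congrArg (· + 1) hlen, ?_⟩
    rw [hammingL_cons, hdist, if_neg (by rw [cpl_iterate_eq_cpl_iterate_iff]; omega), add_comm]

/-- Let `k` be a positive even integer and `n ≥ k + 1`. Define, for
`i ∈ [0, 2^{n-1} - 1]`, `γ^{n,k}_{[i]} = θ^i(0)·γ^{n-1,k-1}_{[i]}` and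
`γ̄^{n,k}_{[i]} = θ^i(1)·γ^{n-1,k-1}_{[i]}`, where `γ^{n-1,k-1}` is the `σ_{k-1}`-Gray
cycle over `{0,1}^{n-1}` built for the odd integer `k - 1`. Then `γ^{n,k}` is a
`σ_k`-Gray cycle over `Even_1^n` (the words of length `n` with an even number of `1`s)
and `γ̄^{n,k}` is a `σ_k`-Gray cycle over `Odd_1^n`; in particular each has length
`2^{n-1}`. -/
theorem statement16 (n k : ℕ) (hk : 0 < k) (hke : Even k) (hn : k + 1 ≤ n) :
    IsGrayCycleOn k (2 ^ (n - 1))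
      (fun i => cpl^[i] 0 :: gammaNK (n - 1) (k - 1) i)
      {w : List (Fin 2) | w.length = n ∧ Even (w.count 1)} ∧
    IsGrayCycleOn k (2 ^ (n - 1))
      (fun i => cpl^[i] 1 :: gammaNK (n - 1) (k - 1) i)
      {w : List (Fin 2) | w.length = n ∧ Odd (w.count 1)} := by
  obtain ⟨t, rfl⟩ : ∃ t, k = 2 * t + 2 := by obtain ⟨j, rfl⟩ := hke; exact ⟨j - 1, by omega⟩
  obtain ⟨n0, hn0, rfl⟩ : ∃ n0, 2 ≤ n0 ∧ n = n0 + 2 * t + 1 := ⟨n - 2 * t - 1, by omega, by omega⟩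
  have hgamma : gammaNK (n0 + 2 * t) (2 * t + 2 - 1) = grSeq n0 true t := by
    funext i
    rw [gammaNK, show n0 + 2 * t + 1 - (2 * t + 2 - 1) = n0 by omega,
      show (2 * t + 2 - 1) / 2 = t by omega]
  have hcycle := (isGrayCycleOn_grSeq hn0 true t).cons_iterate_cpl
    ((Nat.even_pow' (by omega)).2 even_two)
    (fun i hi => (grSeqInvariant hn0 t).count_one_mod_two true i hi)
  simp only [Nat.add_sub_cancel]
  rw [hgamma]
  refine ⟨?_, ?_⟩
  · simpa [Nat.even_iff] using hcycle 0
  · simpa [Nat.odd_iff] using hcycle 1
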